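/- (Corollary 1: exactness of the bound under optimal transitions) With the setup of Proposition 1, let f_T(z_T) = p(z_T|x) be the true posterior of a model p(x, z_T) with p(x) > 0, and q_0 = f_0. If for each t the transitions satisfy f_{t−1}(z_{t−1}) q_t(z_t|z_{t−1}) = f_t(z_t) r_t(z_{t−1}|z_t), then the auxiliary variational lower bound E_{q(z_0,…,z_T)}[ log( p(x,z_T) ∏_{t=1}^T r_t(z_{t−1}|z_t) / (q_0(z_0) ∏_{t=1}^T q_t(z_t|z_{t−1})) ) ] equals log p(x) exactly. -/

import Mathlib

/-!
Under the balance condition the forward path density `q₀(z₀) ∏ qₜ(zₜ | zₜ₋₁)` equals the backward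
density `f_T(z_T) ∏ rₜ(zₜ₋₁ | zₜ)`: the intermediate marginals `fₜ` telescope. Since
`f_T = p(x, ·) / p(x)`, the ratio inside the logarithm is the constant `p(x)` wherever the forward
density does not vanish, so the bound is `log p(x)` times the total mass of the forward chain, and
that mass is `1`, as one sees by integrating out the coordinates from the last one down.
-/

open MeasureTheory Real

namespace MeasureTheory

variable {Ω : Type*} [MeasurableSpace Ω] {n : ℕ}

theorem piFinSuccAbove_last_symm_eq_snoc :
    ⇑(MeasurableEquiv.piFinSuccAbove (fun _ : Fin (n + 1) => Ω) (Fin.last n)).symm =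
      fun p => Fin.snoc p.2 p.1 := by
  ext p
  simp [MeasurableEquiv.piFinSuccAbove_symm_apply, Fin.insertNthEquiv]

theorem measurableEmbedding_snoc :
    MeasurableEmbedding (fun p : Ω × (Fin n → Ω) => (Fin.snoc p.2 p.1 : Fin (n + 1) → Ω)) :=
  piFinSuccAbove_last_symm_eq_snoc (Ω := Ω) ▸ MeasurableEquiv.measurableEmbedding _

theorem measurePreserving_snoc (μ : Measure Ω) [SigmaFinite μ] :
    MeasurePreserving (fun p : Ω × (Fin n → Ω) => (Fin.snoc p.2 p.1 : Fin (n + 1) → Ω))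
      (μ.prod (Measure.pi fun _ => μ)) (Measure.pi fun _ => μ) :=
  piFinSuccAbove_last_symm_eq_snoc (Ω := Ω) ▸
    (measurePreserving_piFinSuccAbove (fun _ : Fin (n + 1) => μ) (Fin.last n)).symm

variable {μ : Measure Ω} [SigmaFinite μ] {F : (Fin (n + 1) → Ω) → ℝ}

theorem integrable_comp_snoc_iff :
    Integrable (fun p : Ω × (Fin n → Ω) => F (Fin.snoc p.2 p.1)) (μ.prod (Measure.pi fun _ => μ)) ↔
      Integrable F (Measure.pi fun _ => μ) :=
  (measurePreserving_snoc μ).integrable_comp_emb measurableEmbedding_snoc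

theorem integral_pi_eq_integral_integral_snoc (hF : Integrable F (Measure.pi fun _ => μ)) :
    ∫ z, F z ∂(Measure.pi fun _ => μ) =
      ∫ w, ∫ b, F (Fin.snoc w b) ∂μ ∂(Measure.pi fun _ => μ) := by
  rw [← (measurePreserving_snoc μ).integral_comp measurableEmbedding_snoc]
  exact integral_prod_symm _ (integrable_comp_snoc_iff.2 hF)

theorem Integrable.integral_snoc (hF : Integrable F (Measure.pi fun _ => μ)) :
    Integrable (fun w => ∫ b, F (Fin.snoc w b) ∂μ) (Measure.pi fun _ => μ) :=
  (integrable_comp_snoc_iff.2 hF).integral_prod_right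

end MeasureTheory

section Chain

variable {Ω M : Type*} [CommMonoid M]

def forwardDensity (g : Ω → M) (q : ℕ → Ω → Ω → M) (n : ℕ) (z : Fin (n + 1) → Ω) : M :=
  g (z 0) * ∏ i : Fin n, q (i + 1) (z i.castSucc) (z i.succ)

def backwardDensity (g : Ω → M) (r : ℕ → Ω → Ω → M) (n : ℕ) (z : Fin (n + 1) → Ω) : M :=
  g (z (Fin.last n)) * ∏ i : Fin n, r (i + 1) (z i.succ) (z i.castSucc)

theorem forwardDensity_snoc (g : Ω → M) (q : ℕ → Ω → Ω → M) {n : ℕ} (w : Fin (n + 1) → Ω)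
    (b : Ω) :
    forwardDensity g q (n + 1) (Fin.snoc w b) =
      forwardDensity g q n w * q (n + 1) (w (Fin.last n)) b := by
  simp [forwardDensity, Fin.prod_univ_castSucc, Fin.succ_castSucc, -Fin.castSucc_succ, mul_assoc]

theorem forwardDensity_eq_backwardDensity {f : ℕ → Ω → M} {q r : ℕ → Ω → Ω → M} {n : ℕ}
    (hbalance : ∀ t, 1 ≤ t → t ≤ n → ∀ a b, f (t - 1) a * q t a b = f t b * r t b a)
    (z : Fin (n + 1) → Ω) :
    forwardDensity (f 0) q n z = backwardDensity (f n) r n z := by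
  induction n with
  | zero => simp [forwardDensity, backwardDensity]
  | succ n ih =>
    have step := hbalance (n + 1) (by omega) le_rfl (z (Fin.last n).castSucc) (z (Fin.last _))
    have hz := forwardDensity_snoc (f 0) q (Fin.init z) (z (Fin.last _))
    rw [Fin.snoc_init_self] at hz
    rw [hz, ih (fun t h1 h2 => hbalance t h1 (by omega)), backwardDensity, backwardDensity,
      Fin.prod_univ_castSucc]
    simp only [Fin.init, Fin.succ_castSucc, Fin.val_castSucc, Fin.val_last,
      Nat.add_sub_cancel] at step ⊢
    rw [mul_right_comm, step]
    ac_rfl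

end Chain

theorem integral_forwardDensity {Ω : Type*} [MeasurableSpace Ω] {μ : Measure Ω} [SigmaFinite μ]
    {g : Ω → ℝ} {q : ℕ → Ω → Ω → ℝ} {n : ℕ}
    (hg : ∫ a, g a ∂μ = 1) (hq : ∀ t, 1 ≤ t → t ≤ n → ∀ a, ∫ b, q t a b ∂μ = 1)
    (hint : Integrable (forwardDensity g q n) (Measure.pi fun _ => μ)) :
    ∫ z, forwardDensity g q n z ∂(Measure.pi fun _ => μ) = 1 := by
  induction n with
  | zero =>
    simp only [forwardDensity, Finset.univ_eq_empty, Finset.prod_empty, mul_one]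
    exact ((measurePreserving_funUnique μ (Fin 1)).integral_comp' g).trans hg
  | succ n ih =>
    have hmarg : (fun w => ∫ b, forwardDensity g q (n + 1) (Fin.snoc w b) ∂μ) =
        forwardDensity g q n := funext fun w => by
      simp only [forwardDensity_snoc, integral_const_mul, hq (n + 1) (by omega) le_rfl, mul_one]
    rw [integral_pi_eq_integral_integral_snoc hint, hmarg]
    exact ih (fun t h1 h2 => hq t h1 (by omega)) (hmarg ▸ hint.integral_snoc)

theorem mul_log_div_eq_mul_log_of_eq {c x y I : ℝ} (h : c = x / I * y) :
    c * log (x * y / c) = c * log I := by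
  rcases eq_or_ne c 0 with rfl | hc
  · simp
  · have hI : I ≠ 0 := by rintro rfl; simp_all
    have hx : x ≠ 0 := by rintro rfl; simp_all
    have hy : y ≠ 0 := by rintro rfl; simp_all
    rw [h]
    field_simp

theorem avo_bound_exact_general
    {Ω : Type*} [MeasurableSpace Ω] (μ : Measure Ω) [SigmaFinite μ]
    (T : ℕ) (f : ℕ → Ω → ℝ) (q r : ℕ → Ω → Ω → ℝ) (pJ : Ω → ℝ)
    -- `pJ z = p(x, z_T)` for the fixed observation `x`; f T is the true posterior:
    (hposterior : ∀ z, f T z = pJ z / (∫ z', pJ z' ∂μ))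
    (hf_prob : ∀ t ≤ T, ∫ z, f t z ∂μ = 1)
    (hq_cond : ∀ t, 1 ≤ t → t ≤ T → ∀ a, ∫ b, q t a b ∂μ = 1)
    (hbalance : ∀ t, 1 ≤ t → t ≤ T → ∀ a b, f (t - 1) a * q t a b = f t b * r t b a)
    (hint : Integrable
      (fun z : Fin (T + 1) → Ω =>
        (f 0 (z 0) * ∏ i : Fin T, q ((i : ℕ) + 1) (z i.castSucc) (z i.succ)) *
          Real.log
            ((pJ (z (Fin.last T)) *
                ∏ i : Fin T, r ((i : ℕ) + 1) (z i.succ) (z i.castSucc)) /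
              (f 0 (z 0) * ∏ i : Fin T, q ((i : ℕ) + 1) (z i.castSucc) (z i.succ))))
      (Measure.pi fun _ : Fin (T + 1) => μ)) :
    ∫ z : Fin (T + 1) → Ω,
        (f 0 (z 0) * ∏ i : Fin T, q ((i : ℕ) + 1) (z i.castSucc) (z i.succ)) *
          Real.log
            ((pJ (z (Fin.last T)) *
                ∏ i : Fin T, r ((i : ℕ) + 1) (z i.succ) (z i.castSucc)) /
              (f 0 (z 0) * ∏ i : Fin T, q ((i : ℕ) + 1) (z i.castSucc) (z i.succ)))
        ∂(Measure.pi fun _ : Fin (T + 1) => μ)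
      = Real.log (∫ z, pJ z ∂μ) := by
  set logpx := Real.log (∫ z, pJ z ∂μ)
  have hpointwise : ∀ z : Fin (T + 1) → Ω,
      forwardDensity (f 0) q T z *
          log ((pJ (z (Fin.last T)) * ∏ i : Fin T, r (i + 1) (z i.succ) (z i.castSucc)) /
            forwardDensity (f 0) q T z) = forwardDensity (f 0) q T z * logpx := fun z => by
    refine mul_log_div_eq_mul_log_of_eq ?_
    rw [forwardDensity_eq_backwardDensity hbalance, backwardDensity, hposterior]
  have hmass := integral_forwardDensity (μ := μ) (hf_prob 0 T.zero_le) hq_cond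
  -- unfolded so that `hpointwise` matches the integrand exactly as the statement writes it
  simp only [forwardDensity] at hpointwise hmass
  simp only [hpointwise, integral_mul_const] at hint ⊢
  -- `hint` gives integrability of the forward density only when `log p(x) ≠ 0`
  rcases eq_or_ne logpx 0 with hlog | hlog
  · rw [hlog, mul_zero]
  · rw [hmass ((integrable_mul_const_iff hlog.isUnit _).1 hint), one_mul]

/-- Corollary 1 (exactness of the bound under optimal transitions): if `f_T` is the true
posterior `p(z_T|x) = p(x,z_T)/p(x)`, `q_0 = f_0`, and each pair of transitions satisfies
the balance condition `f_{t−1}(a) q_t(b|a) = f_t(b) r_t(a|b)`, then the auxiliary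
variational lower bound
`E_{q(z_0,…,z_T)}[log( p(x,z_T) ∏ r_t(z_{t−1}|z_t) / (q_0(z_0) ∏ q_t(z_t|z_{t−1})) )]`
equals `log p(x)` exactly. -/
theorem avo_bound_exact
    {Ω : Type*} [MeasurableSpace Ω] (μ : Measure Ω) [SigmaFinite μ]
    (T : ℕ) (f : ℕ → Ω → ℝ) (q r : ℕ → Ω → Ω → ℝ) (pJ : Ω → ℝ)
    -- `pJ z = p(x, z_T)` for the fixed observation `x`; f T is the true posterior:
    (hpJ_pos : ∀ z, 0 < pJ z) (hpJ_int : Integrable pJ μ)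
    (hpx_pos : 0 < ∫ z, pJ z ∂μ)
    (hposterior : ∀ z, f T z = pJ z / (∫ z', pJ z' ∂μ))
    (hf_pos : ∀ t, ∀ z, 0 < f t z)
    (hf_prob : ∀ t ≤ T, ∫ z, f t z ∂μ = 1)
    (hq_pos : ∀ t a b, 0 < q t a b) (hr_pos : ∀ t b a, 0 < r t b a)
    (hq_cond : ∀ t, 1 ≤ t → t ≤ T → ∀ a, ∫ b, q t a b ∂μ = 1)
    (hr_cond : ∀ t, 1 ≤ t → t ≤ T → ∀ b, ∫ a, r t b a ∂μ = 1)
    (hbalance : ∀ t, 1 ≤ t → t ≤ T → ∀ a b, f (t - 1) a * q t a b = f t b * r t b a)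
    (hint : Integrable
      (fun z : Fin (T + 1) → Ω =>
        (f 0 (z 0) * ∏ i : Fin T, q ((i : ℕ) + 1) (z i.castSucc) (z i.succ)) *
          Real.log
            ((pJ (z (Fin.last T)) *
                ∏ i : Fin T, r ((i : ℕ) + 1) (z i.succ) (z i.castSucc)) /
              (f 0 (z 0) * ∏ i : Fin T, q ((i : ℕ) + 1) (z i.castSucc) (z i.succ))))
      (Measure.pi fun _ : Fin (T + 1) => μ)) :
    ∫ z : Fin (T + 1) → Ω,
        (f 0 (z 0) * ∏ i : Fin T, q ((i : ℕ) + 1) (z i.castSucc) (z i.succ)) *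
          Real.log
            ((pJ (z (Fin.last T)) *
                ∏ i : Fin T, r ((i : ℕ) + 1) (z i.succ) (z i.castSucc)) /
              (f 0 (z 0) * ∏ i : Fin T, q ((i : ℕ) + 1) (z i.castSucc) (z i.succ)))
        ∂(Measure.pi fun _ : Fin (T + 1) => μ)
      = Real.log (∫ z, pJ z ∂μ) :=
  avo_bound_exact_general μ T f q r pJ hposterior hf_prob hq_cond hbalance hint
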